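/- Let V be an absolute matrix order unit space satisfying (T). Define on equivalence classes [p] (under ≈) of 𝒪𝒫_∞(V) the operation [p] + [q] = [p ⊕ q]. Then (𝒪𝒫_∞(V)/≈, +) is a well-defined abelian semigroup with identity [0] satisfying the cancellation law: [p] + [r] = [q] + [r] implies [p] = [q]. -/

import Mathlib

noncomputable section

open scoped Matrix.Norms.L2Operator

/-! ### The *-algebra 𝔉 of ∞×∞ complex matrices with finitely many nonzero entries -/

/-- `∞ × ∞` complex matrices (indexed by `ℕ × ℕ`). -/
abbrev FMat := ℕ → ℕ → ℂ

/-- The matrix has (at most) finitely many nonzero entries: it is supported in some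
`n × n` top-left block. -/
def IsFin (a : FMat) : Prop := ∃ n, ∀ i j, (n ≤ i ∨ n ≤ j) → a i j = 0

/-- Matrix multiplication in `𝔉` (the `tsum` is a finite sum for finitely supported
matrices). -/
def fmul (a b : FMat) : FMat := fun i k => ∑' j, a i j * b j k

/-- The involution (conjugate transpose) on `𝔉`. -/
def fstar (a : FMat) : FMat := fun i j => starRingEnd ℂ (a j i)

/-- The matrix unit `𝔢_{i,j}`. -/
def eUnit (i j : ℕ) : FMat := fun k l => if k = i ∧ l = j then 1 else 0

/-- `𝔍ₙ = Σ_{i<n} 𝔢_{i,i}`, the partial identities. -/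
def JMat (n : ℕ) : FMat := fun k l => if k = l ∧ k < n then 1 else 0

/-- `𝔎ₙ = Σ_{i<n} 𝔢_{i,n+i}`, used for `2×2`-block constructions. -/
def KMat (n : ℕ) : FMat := fun k l => if l = k + n ∧ k < n then 1 else 0

/-- The diagonal idempotent `Σ_{i ∈ s} 𝔢_{i,i}` associated to a finite set `s ⊂ ℕ`. -/
def finsetDiag (s : Finset ℕ) : FMat := fun k l => if k = l ∧ k ∈ s then 1 else 0

/-- The operator norm on `𝔉`: the supremum of the (C*-algebra) operator norms of the
finite top-left blocks (for a finitely supported matrix the blocks stabilize). -/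
def fnorm (a : FMat) : ℝ :=
  ⨆ n : ℕ, ‖(Matrix.of fun i j : Fin n => a i j : Matrix (Fin n) (Fin n) ℂ)‖

/-- The order `o(𝔞)` of a finitely supported matrix: the least `n` such that `𝔞` is
supported in the top-left `n × n` block. -/
def matOrd (a : FMat) : ℕ := sInf {n | ∀ i j, (n ≤ i ∨ n ≤ j) → a i j = 0}

/-- A local unitary in `𝔉`: `𝔞*𝔞 = 𝔍_{o(𝔞)} = 𝔞𝔞*`. -/
def IsLocalUnitary (a : FMat) : Prop :=
  IsFin a ∧ fmul (fstar a) a = JMat (matOrd a) ∧ fmul a (fstar a) = JMat (matOrd a)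

/-! ### Non-degenerate *-𝔉-bimodules -/

/-- A non-degenerate `*`-`𝔉`-bimodule structure on a complex vector space `V`:
left and right actions of (finitely supported) infinite matrices together with an
involution, compatible with each other and with the complex scalars, such that every
element is `𝔍ₙ·v·𝔍ₙ` for some `n`. -/
structure FBimod (V : Type*) [AddCommGroup V] [Module ℂ V] where
  lsmul : FMat → V → V
  rsmul : V → FMat → V
  star : V → V
  lsmul_add : ∀ a u v, lsmul a (u + v) = lsmul a u + lsmul a v
  rsmul_add : ∀ u v b, rsmul (u + v) b = rsmul u b + rsmul v b
  add_lsmul : ∀ a b v, IsFin a → IsFin b → lsmul (a + b) v = lsmul a v + lsmul b v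
  rsmul_add' : ∀ v a b, IsFin a → IsFin b → rsmul v (a + b) = rsmul v a + rsmul v b
  smul_lsmul : ∀ (c : ℂ) a v, IsFin a → lsmul (c • a) v = c • lsmul a v
  smul_rsmul : ∀ (c : ℂ) v a, IsFin a → rsmul v (c • a) = c • rsmul v a
  mul_lsmul : ∀ a b v, IsFin a → IsFin b → lsmul (fmul a b) v = lsmul a (lsmul b v)
  rsmul_mul : ∀ v a b, IsFin a → IsFin b → rsmul v (fmul a b) = rsmul (rsmul v a) b
  lsmul_rsmul : ∀ a v b, IsFin a → IsFin b → rsmul (lsmul a v) b = lsmul a (rsmul v b)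
  star_add : ∀ u v, star (u + v) = star u + star v
  star_star : ∀ v, star (star v) = v
  star_lsmul : ∀ a v, IsFin a → star (lsmul a v) = rsmul (star v) (fstar a)
  star_rsmul : ∀ v a, IsFin a → star (rsmul v a) = lsmul (fstar a) (star v)
  smul_compat : ∀ (c : ℂ) (n : ℕ) v, lsmul (JMat n) (rsmul v (JMat n)) = v →
    lsmul (c • JMat n) v = c • v
  nondeg : ∀ v, ∃ n, lsmul (JMat n) (rsmul v (JMat n)) = v

namespace FBimod

variable {V : Type*} [AddCommGroup V] [Module ℂ V] (M : FBimod V)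

/-- `𝔍ₙ 𝔳 𝔍ₙ`. -/
def cut (n : ℕ) (v : V) : V := M.lsmul (JMat n) (M.rsmul v (JMat n))

/-- The order `o(𝔳)`: the smallest `n` with `𝔍ₙ 𝔳 𝔍ₙ = 𝔳`. -/
def ord (v : V) : ℕ := sInf {n | M.cut n v = v}

/-- `𝔞* 𝔳 𝔞`. -/
def conj (a : FMat) (v : V) : V := M.lsmul (fstar a) (M.rsmul v a)

/-- `C` is a bimodule cone: consists of self-adjoint elements, is closed under
addition and under `𝔳 ↦ 𝔞*𝔳𝔞` for `𝔞 ∈ 𝔉`. -/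
def IsCone (C : Set V) : Prop :=
  (∀ v ∈ C, M.star v = v) ∧ (∀ u ∈ C, ∀ v ∈ C, u + v ∈ C) ∧
    (∀ v ∈ C, ∀ a : FMat, IsFin a → M.conj a v ∈ C)

/-- The cone `C` is proper: `C ∩ (−C) = {0}`. -/
def ConeProper (C : Set V) : Prop := ∀ v ∈ C, -v ∈ C → v = 0

/-- The cone `C` is Archimedean. -/
def ConeArch (C : Set V) : Prop :=
  ∀ u ∈ C, ∀ v : V, M.star v = v → (∀ k : ℝ, 0 < k → (k : ℂ) • u + v ∈ C) → v ∈ C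

/-- The cone `C` is generating. -/
def ConeGen (C : Set V) : Prop :=
  ∀ v : V, ∃ v₀ ∈ C, ∃ v₁ ∈ C, ∃ v₂ ∈ C, ∃ v₃ ∈ C,
    v = v₀ + Complex.I • v₁ - v₂ - Complex.I • v₃

/-- `(𝔳₁, 𝔳₂)ₙ⁺ = 𝔳₁ + 𝔎ₙ* 𝔳₂ 𝔎ₙ` (the diagonal `2×2`-block `diag(𝔳₁,𝔳₂)`). -/
def pairPlus (n : ℕ) (v₁ v₂ : V) : V :=
  v₁ + M.lsmul (fstar (KMat n)) (M.rsmul v₂ (KMat n))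

/-- `saₙ(𝔳) = 𝔍ₙ 𝔳 𝔎ₙ + 𝔎ₙ* 𝔳* 𝔍ₙ` (the off-diagonal `2×2`-block of `𝔳`). -/
def san (n : ℕ) (v : V) : V :=
  M.lsmul (JMat n) (M.rsmul v (KMat n)) +
    M.lsmul (fstar (KMat n)) (M.rsmul (M.star v) (JMat n))

/-- `𝔲` and `𝔳` are `𝔉`-independent: compressed onto disjoint diagonal blocks. -/
def FIndep (u v : V) : Prop :=
  ∃ I J : Finset ℕ, Disjoint I J ∧
    M.lsmul (finsetDiag I) (M.rsmul u (finsetDiag I)) = u ∧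
    M.lsmul (finsetDiag J) (M.rsmul v (finsetDiag J)) = v

/-- `(𝔙, C, abs)` is a non-degenerate absolutely ordered `𝔉`-bimodule
(Definition 18 of the paper). -/
structure IsAbsOrd (C : Set V) (abs : V → V) : Prop where
  cone : M.IsCone C
  abs_mem : ∀ v, abs v ∈ C
  ord_abs_le : ∀ v, M.ord (abs v) ≤ M.ord v
  abs_of_mem : ∀ v ∈ C, abs v = v
  pos_part : ∀ v, M.pairPlus (M.ord v) (abs (M.star v)) (abs v) + M.san (M.ord v) v ∈ C
  abs_smul_le : ∀ (a b : FMat), IsFin a → IsFin b → ∀ v,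
    (fnorm a : ℂ) • abs (M.rsmul (abs v) b) - abs (M.lsmul a (M.rsmul v b)) ∈ C
  indep_add : ∀ u v, M.FIndep u v → abs (u + v) = abs u + abs v
  absorb : ∀ u ∈ C, ∀ v ∈ C, ∀ w ∈ C, abs (u - v) = u + v → v - w ∈ C →
    abs (u - w) = u + w
  ortho_pm : ∀ u ∈ C, ∀ v ∈ C, ∀ w ∈ C, abs (u - v) = u + v → abs (u - w) = u + w →
    abs (u - abs (v + w)) = u + abs (v + w) ∧ abs (u - abs (v - w)) = u + abs (v - w)

/-- `eⁿ = Σ_{i<n} 𝔢_{i,0} 𝔢 𝔢_{0,i}` for an element `𝔢` of order `1`. -/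
def epow (e : V) (n : ℕ) : V :=
  ∑ i ∈ Finset.range n, M.lsmul (eUnit i 0) (M.rsmul e (eUnit 0 i))

/-- `𝔢` is a local order unit for `(𝔙, C)`. -/
def IsLocalOrderUnit (C : Set V) (e : V) : Prop :=
  e ∈ C ∧ M.cut 1 e = e ∧ ∀ v : V, M.cut 1 v = v → ∃ k : ℝ, 0 < k ∧
    M.pairPlus 1 ((k : ℂ) • e) ((k : ℂ) • e) + M.san 1 v ∈ C

/-- `(𝔙, C, 𝔢)` is a local `𝔉`-order unit bimodule. -/
def IsLocalUnitBimod (C : Set V) (e : V) : Prop :=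
  M.IsCone C ∧ ConeProper C ∧ M.ConeArch C ∧ M.IsLocalOrderUnit C e

/-- The norm associated to a local order unit:
`‖𝔳‖ = inf { k > 0 : (k𝔢^{o(𝔳)}, k𝔢^{o(𝔳)})⁺_{o(𝔳)} + sa_{o(𝔳)}(𝔳) ∈ C }`. -/
def lnorm (C : Set V) (e : V) (v : V) : ℝ :=
  sInf {k : ℝ | 0 < k ∧
    M.pairPlus (M.ord v) ((k : ℂ) • M.epow e (M.ord v)) ((k : ℂ) • M.epow e (M.ord v)) +
      M.san (M.ord v) v ∈ C}

/-- `𝔲 ⊥_∞ 𝔳` with respect to the local-order-unit norm. -/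
def PerpInf (C : Set V) (e : V) (u v : V) : Prop :=
  ∀ k₁ k₂ : ℝ, M.lnorm C e ((k₁ : ℂ) • u + (k₂ : ℂ) • v) =
    max (M.lnorm C e ((k₁ : ℂ) • u)) (M.lnorm C e ((k₂ : ℂ) • v))

end FBimod
/-! ### Matrices over a complex *-vector space -/

section MatrixLevel

variable {V : Type*} [AddCommGroup V] [Module ℂ V] [StarAddMonoid V] [StarModule ℂ V]

/-- Conjugate transpose of a rectangular matrix over a `*`-vector space. -/
def mstar {m n : ℕ} (v : Matrix (Fin m) (Fin n) V) : Matrix (Fin n) (Fin m) V :=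
  fun i j => star (v j i)

/-- Left action of a scalar matrix: `(a v)_{ij} = Σ_k a_{ik} v_{kj}`. -/
def aSmul {r m n : ℕ} (a : Matrix (Fin r) (Fin m) ℂ) (v : Matrix (Fin m) (Fin n) V) :
    Matrix (Fin r) (Fin n) V :=
  fun i j => ∑ k, a i k • v k j

/-- Right action of a scalar matrix: `(v b)_{ij} = Σ_k b_{kj} • v_{ik}`. -/
def smulB {m n s : ℕ} (v : Matrix (Fin m) (Fin n) V) (b : Matrix (Fin n) (Fin s) ℂ) :
    Matrix (Fin m) (Fin s) V :=
  fun i j => ∑ k, b k j • v i k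

/-- Direct sum (block diagonal) of rectangular matrices over `V`. -/
def dsum {m n r s : ℕ} (v : Matrix (Fin m) (Fin n) V) (w : Matrix (Fin r) (Fin s) V) :
    Matrix (Fin (m + r)) (Fin (n + s)) V :=
  fun i j =>
    if hi : (i : ℕ) < m then
      (if hj : (j : ℕ) < n then v ⟨i, hi⟩ ⟨j, hj⟩ else 0)
    else
      (if hj : (j : ℕ) < n then 0
       else w ⟨(i : ℕ) - m, by have := i.isLt; omega⟩ ⟨(j : ℕ) - n, by have := j.isLt; omega⟩)

end MatrixLevel

/-- The L2-operator norm of a rectangular complex scalar matrix. -/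
def cnorm {r m : ℕ} (a : Matrix (Fin r) (Fin m) ℂ) : ℝ := ‖a‖

/-- Embedding of a finite rectangular complex matrix into `𝔉`. -/
def embC {r m : ℕ} (a : Matrix (Fin r) (Fin m) ℂ) : FMat :=
  fun i j => if hi : i < r then (if hj : j < m then a ⟨i, hi⟩ ⟨j, hj⟩ else 0) else 0

/-- `e ⊕ ⋯ ⊕ e`: the diagonal matrix with constant diagonal `e`. -/
def diagE {V : Type*} [AddCommGroup V] (e : V) (n : ℕ) : Matrix (Fin n) (Fin n) V :=
  Matrix.of fun i j => if i = j then e else 0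

/-! ### Absolutely matrix ordered spaces and absolute matrix order unit spaces -/

/-- An absolutely matrix ordered space structure on a complex `*`-vector space `V`:
matrix cones `Mₙ(V)⁺` and absolute values `|·|_{m,n} : M_{m,n}(V) → Mₙ(V)⁺`
(Definition 4.1 of Karn-Kumar). -/
structure AMOS (V : Type*) [AddCommGroup V] [Module ℂ V] [StarAddMonoid V]
    [StarModule ℂ V] where
  pos : ∀ n : ℕ, Set (Matrix (Fin n) (Fin n) V)
  abs : ∀ m n : ℕ, Matrix (Fin m) (Fin n) V → Matrix (Fin n) (Fin n) V
  pos_star : ∀ n, ∀ v ∈ pos n, mstar v = v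
  pos_add : ∀ n, ∀ u ∈ pos n, ∀ v ∈ pos n, u + v ∈ pos n
  pos_conj : ∀ m n (a : Matrix (Fin n) (Fin m) ℂ), ∀ v ∈ pos n,
    aSmul a.conjTranspose (smulB v a) ∈ pos m
  abs_mem : ∀ m n v, abs m n v ∈ pos n
  abs_of_pos : ∀ n, ∀ v ∈ pos n, abs n n v = v
  abs_add_self : ∀ n (v : Matrix (Fin n) (Fin n) V), mstar v = v →
    abs n n v + v ∈ pos n ∧ abs n n v - v ∈ pos n
  abs_real_smul : ∀ n (k : ℝ) (v : Matrix (Fin n) (Fin n) V), mstar v = v →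
    abs n n ((k : ℂ) • v) = ((|k| : ℝ) : ℂ) • abs n n v
  absorb : ∀ n, ∀ u ∈ pos n, ∀ v ∈ pos n, ∀ w ∈ pos n,
    abs n n (u - v) = u + v → v - w ∈ pos n → abs n n (u - w) = u + w
  ortho_pm : ∀ n, ∀ u ∈ pos n, ∀ v ∈ pos n, ∀ w ∈ pos n,
    abs n n (u - v) = u + v → abs n n (u - w) = u + w →
    abs n n (u - abs n n (v + w)) = u + abs n n (v + w) ∧
      abs n n (u - abs n n (v - w)) = u + abs n n (v - w)
  abs_smul_le : ∀ (r m n s : ℕ) (α : Matrix (Fin r) (Fin m) ℂ)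
    (v : Matrix (Fin m) (Fin n) V) (β : Matrix (Fin n) (Fin s) ℂ),
    (cnorm α : ℂ) • abs n s (smulB (abs m n v) β) - abs r s (aSmul α (smulB v β)) ∈ pos s
  abs_dsum : ∀ (m n r s : ℕ) (v : Matrix (Fin m) (Fin n) V) (w : Matrix (Fin r) (Fin s) V),
    abs (m + r) (n + s) (dsum v w) = dsum (abs m n v) (abs r s w)

/-- A matrix order unit structure on top of an absolutely matrix ordered space:
an order unit `e` with `V⁺` proper and each `Mₙ(V)⁺` Archimedean. -/
structure AMOUS (V : Type*) [AddCommGroup V] [Module ℂ V] [StarAddMonoid V]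
    [StarModule ℂ V] extends AMOS V where
  e : V
  e_pos : diagE e 1 ∈ pos 1
  proper : ∀ v ∈ pos 1, -v ∈ pos 1 → v = 0
  arch : ∀ n (v : Matrix (Fin n) (Fin n) V), mstar v = v →
    (∀ k : ℝ, 0 < k → (k : ℂ) • diagE e n + v ∈ pos n) →
    v ∈ pos n
  unit : ∀ n (v : Matrix (Fin n) (Fin n) V), mstar v = v →
    ∃ k : ℝ, 0 < k ∧ (k : ℂ) • diagE e n - v ∈ pos n ∧
      (k : ℂ) • diagE e n + v ∈ pos n

namespace AMOUS

variable {V : Type*} [AddCommGroup V] [Module ℂ V] [StarAddMonoid V] [StarModule ℂ V]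
variable (A : AMOUS V)

/-- `eⁿ = e ⊕ ⋯ ⊕ e ∈ Mₙ(V)`. -/
def eN (n : ℕ) : Matrix (Fin n) (Fin n) V := diagE A.e n

/-- The `2n × 2n` matrix `[[a, b], [c, d]]` of `n × n` blocks. -/
def block2 {n : ℕ} (a b c d : Matrix (Fin n) (Fin n) V) :
    Matrix (Fin (n + n)) (Fin (n + n)) V :=
  fun i j =>
    if hi : (i : ℕ) < n then
      (if hj : (j : ℕ) < n then a ⟨i, hi⟩ ⟨j, hj⟩
       else b ⟨i, hi⟩ ⟨(j : ℕ) - n, by have := j.isLt; omega⟩)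
    else
      (if hj : (j : ℕ) < n then c ⟨(i : ℕ) - n, by have := i.isLt; omega⟩ ⟨j, hj⟩
       else d ⟨(i : ℕ) - n, by have := i.isLt; omega⟩ ⟨(j : ℕ) - n, by have := j.isLt; omega⟩)

end AMOUS
namespace AMOUS

variable {V : Type*} [AddCommGroup V] [Module ℂ V] [StarAddMonoid V] [StarModule ℂ V]
variable (A : AMOUS V)

/-- The matrix norms of a matrix order unit space:
`‖v‖ₙ = inf { k > 0 : [[k eⁿ, v], [v*, k eⁿ]] ∈ M₂ₙ(V)⁺ }`. -/
def mnorm (n : ℕ) (v : Matrix (Fin n) (Fin n) V) : ℝ :=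
  sInf {k : ℝ | 0 < k ∧
    block2 ((k : ℂ) • A.eN n) v (mstar v) ((k : ℂ) • A.eN n) ∈ A.pos (n + n)}

/-- Orthogonality `u ⊥ v` (for positive elements): `|u − v| = u + v`. -/
def Perp {n : ℕ} (u v : Matrix (Fin n) (Fin n) V) : Prop :=
  A.abs n n (u - v) = u + v

/-- `u ⊥_∞ v`: `‖k₁ u + k₂ v‖ = max {‖k₁ u‖, ‖k₂ v‖}` for all real `k₁, k₂`. -/
def PerpInfM {n : ℕ} (u v : Matrix (Fin n) (Fin n) V) : Prop :=
  ∀ k₁ k₂ : ℝ, A.mnorm n ((k₁ : ℂ) • u + (k₂ : ℂ) • v) =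
    max (A.mnorm n ((k₁ : ℂ) • u)) (A.mnorm n ((k₂ : ℂ) • v))

/-- `u ⊥_∞^a v`: absolute `∞`-orthogonality. -/
def PerpInfA {n : ℕ} (u v : Matrix (Fin n) (Fin n) V) : Prop :=
  ∀ u₁ ∈ A.pos n, ∀ v₁ ∈ A.pos n, u - u₁ ∈ A.pos n → v - v₁ ∈ A.pos n → A.PerpInfM u₁ v₁

/-- `(V, {Mₙ(V)⁺}, {|·|}, e)` is an absolute matrix order unit space:
`⊥ = ⊥_∞^a` on each `Mₙ(V)⁺`. -/
def IsAbsolute : Prop :=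
  ∀ n, ∀ u ∈ A.pos n, ∀ v ∈ A.pos n, (A.Perp u v ↔ A.PerpInfA u v)

/-- `p` is an order projection in `Mₙ(V)`: `p* = p` and `|2p − eⁿ| = eⁿ`. -/
def IsOP (n : ℕ) (p : Matrix (Fin n) (Fin n) V) : Prop :=
  mstar p = p ∧ A.abs n n ((2 : ℂ) • p - A.eN n) = A.eN n

/-- `v ∈ M_{m,n}(V)` is a partial isometry: `|v|` and `|v*|` are order projections. -/
def IsPI {m n : ℕ} (v : Matrix (Fin m) (Fin n) V) : Prop :=
  A.IsOP n (A.abs m n v) ∧ A.IsOP m (A.abs n m (mstar v))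

end AMOUS

/-- An element of `M_∞(V)`: a matrix at some level `n`. -/
def OPE (V : Type*) : Type _ := Σ n : ℕ, Matrix (Fin n) (Fin n) V

namespace OPE

variable {V : Type*} [AddCommGroup V] [Module ℂ V] [StarAddMonoid V] [StarModule ℂ V]

/-- Direct sum in `M_∞(V)`. -/
def d (p q : OPE V) : OPE V := ⟨p.1 + q.1, dsum p.2 q.2⟩

/-- The zero order projection (at level 1). -/
def zero (V : Type*) [AddCommGroup V] : OPE V := ⟨1, 0⟩

end OPE

namespace AMOUS

variable {V : Type*} [AddCommGroup V] [Module ℂ V] [StarAddMonoid V] [StarModule ℂ V]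
variable (A : AMOUS V)

/-- Membership in `𝒪𝒫_∞(V)`. -/
def IsOPE (p : OPE V) : Prop := A.IsOP p.1 p.2

/-- `eⁿ` as an element of `𝒪𝒫_∞(V)`. -/
def eOPE (n : ℕ) : OPE V := ⟨n, A.eN n⟩

/-- Partial isometric equivalence `p ∼ q` of order projections: there is a partial
isometry `v` with `p = |v*|` and `q = |v|`. -/
def Sim (p q : OPE V) : Prop :=
  ∃ v : Matrix (Fin p.1) (Fin q.1) V,
    A.IsPI v ∧ p.2 = A.abs q.1 p.1 (mstar v) ∧ q.2 = A.abs p.1 q.1 v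

/-- Condition (T). -/
def CondT : Prop :=
  ∀ (m n l : ℕ) (u : Matrix (Fin m) (Fin n) V) (v : Matrix (Fin l) (Fin n) V),
    A.IsPI u → A.IsPI v → A.abs m n u = A.abs l n v →
    ∃ w : Matrix (Fin m) (Fin l) V, A.IsPI w ∧
      A.abs l m (mstar w) = A.abs n m (mstar u) ∧ A.abs m l w = A.abs n l (mstar v)

/-- Stabilized equivalence `p ≈ q`: `p ⊕ r ∼ q ⊕ r` for some order projection `r`. -/
def ASim (p q : OPE V) : Prop := ∃ r : OPE V, A.IsOPE r ∧ A.Sim (p.d r) (q.d r)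

/-- A pair of order projections, representing an element `[(p,q)]` of `K₀(V)`. -/
def IsOPPair (x : OPE V × OPE V) : Prop := A.IsOPE x.1 ∧ A.IsOPE x.2

/-- The relation `(p₁,q₁) ≡ (p₂,q₂) ↔ p₁ ⊕ q₂ ≈ p₂ ⊕ q₁` defining `K₀(V)`. -/
def Krel (x y : OPE V × OPE V) : Prop := A.ASim (x.1.d y.2) (y.1.d x.2)

/-- Addition of representatives of `K₀(V)` classes. -/
def kadd (x y : OPE V × OPE V) : OPE V × OPE V := (x.1.d y.1, x.2.d y.2)

/-- The representative of the zero class of `K₀(V)`. -/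
def kzero : OPE V × OPE V := (OPE.zero V, OPE.zero V)

/-- Representative-level membership in the cone `K₀(V)⁺ = {[(p,0)] : p ∈ 𝒪𝒫_∞(V)}`. -/
def KPos (x : OPE V × OPE V) : Prop :=
  ∃ p : OPE V, A.IsOPE p ∧ A.Krel x (p, OPE.zero V)

/-- Representative-level order `[x] ≤ [y]` in `K₀(V)`: `[y] − [x] ∈ K₀(V)⁺`. -/
def Kle (x y : OPE V × OPE V) : Prop :=
  ∃ r : OPE V, A.IsOPE r ∧ A.Krel (kadd x (r, OPE.zero V)) y

/-- The order projection `p ∈ Mₙ(V)` is finite: `q ∼ p` and `q ≥ p` imply `q = p`. -/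
def FiniteOP (n : ℕ) (p : Matrix (Fin n) (Fin n) V) : Prop :=
  ∀ q : Matrix (Fin n) (Fin n) V, A.IsOP n q → A.Sim ⟨n, q⟩ ⟨n, p⟩ →
    q - p ∈ A.pos n → q = p

end AMOUS

/-! ### Maps between absolute matrix order unit spaces -/

section Maps

variable {V W : Type*} [AddCommGroup V] [Module ℂ V] [StarAddMonoid V] [StarModule ℂ V]
  [AddCommGroup W] [Module ℂ W] [StarAddMonoid W] [StarModule ℂ W]

/-- The amplification `φₙ` (entrywise application) of a map. -/
def mmap (φ : V →ₗ[ℂ] W) {m n : ℕ} (v : Matrix (Fin m) (Fin n) V) :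
    Matrix (Fin m) (Fin n) W :=
  fun i j => φ (v i j)

/-- `φ` is completely `|·|`-preserving: every amplification `φₙ` is `|·|`-preserving. -/
def CAbsPres (A : AMOUS V) (B : AMOUS W) (φ : V →ₗ[ℂ] W) : Prop :=
  ∀ (n : ℕ) (v : Matrix (Fin n) (Fin n) V), B.abs n n (mmap φ v) = mmap φ (A.abs n n v)

/-- `φ` and `ψ` are completely orthogonal: `φₙ(u) ⊥ ψₙ(v)` for all positive `u, v`. -/
def COrth (A : AMOUS V) (B : AMOUS W) (φ ψ : V →ₗ[ℂ] W) : Prop :=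
  ∀ (n : ℕ) (u v : Matrix (Fin n) (Fin n) V), u ∈ A.pos n → v ∈ A.pos n →
    B.Perp (mmap φ u) (mmap ψ v)

/-- The image of an element of `M_∞(V)` under (the amplifications of) `φ`. -/
def mmapOPE (φ : V →ₗ[ℂ] W) (p : OPE V) : OPE W := ⟨p.1, mmap φ p.2⟩

/-- `F` represents a group homomorphism `K₀(V) → K₀(W)` making the `K₀` diagram of `φ`
commute: it maps `K₀`-representatives to `K₀`-representatives, respects the defining
relation `≡`, is additive, and satisfies `F([(p, 0)]) = [(φ(p), 0)]`. -/
def K0HomProp (A : AMOUS V) (B : AMOUS W) (φ : V →ₗ[ℂ] W)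
    (F : OPE V × OPE V → OPE W × OPE W) : Prop :=
  (∀ x, A.IsOPPair x → B.IsOPPair (F x)) ∧
  (∀ x y, A.IsOPPair x → A.IsOPPair y → A.Krel x y → B.Krel (F x) (F y)) ∧
  (∀ x y, A.IsOPPair x → A.IsOPPair y → B.Krel (F (AMOUS.kadd x y)) (AMOUS.kadd (F x) (F y))) ∧
  (∀ p : OPE V, A.IsOPE p → B.Krel (F (p, OPE.zero V)) (mmapOPE φ p, OPE.zero W))

/-- The completely bounded norm of `φ` with respect to the order unit matrix norms. -/
def cbNorm (A : AMOUS V) (B : AMOUS W) (φ : V →ₗ[ℂ] W) : ℝ :=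
  ⨆ n : ℕ, sInf {c : ℝ | 0 ≤ c ∧
    ∀ v : Matrix (Fin n) (Fin n) V, B.mnorm n (mmap φ v) ≤ c * A.mnorm n v}

end Maps

/-! A partial isometry `v` witnesses `|v*| ∼ |v|`, so `∼` is symmetric (`v ↦ v*`), compatible with
`⊕` (`|v ⊕ w| = |v| ⊕ |w|`) and, by (T), transitive. Permutation matrices are isometries and
`|α v| ≤ ‖α‖ |v|`, so permuting the rows of `v` does not change `|v|`; this gives
`p ⊕ q ∼ q ⊕ p`, while `⊕` is associative on the nose and `p ⊕ 0₁ ∼ p` is witnessed by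
`p ⊕ 0_{1×0}`. The stabilised relation `≈` inherits all of this, and cancellation is immediate
because `(p ⊕ r) ⊕ s = p ⊕ (r ⊕ s)` exhibits `r ⊕ s` as a stabiliser. -/

section MatrixAlgebra

variable {V : Type*} [AddCommGroup V]

section DirectSum

variable {m n r s : ℕ} (v : Matrix (Fin m) (Fin n) V) (w : Matrix (Fin r) (Fin s) V)

@[simp]
lemma dsum_castAdd_castAdd (i : Fin m) (j : Fin n) :
    dsum v w (Fin.castAdd r i) (Fin.castAdd s j) = v i j := by
  simp [dsum]

@[simp]
lemma dsum_castAdd_natAdd (i : Fin m) (j : Fin s) :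
    dsum v w (Fin.castAdd r i) (Fin.natAdd n j) = 0 := by
  simp [dsum]

@[simp]
lemma dsum_natAdd_castAdd (i : Fin r) (j : Fin n) :
    dsum v w (Fin.natAdd m i) (Fin.castAdd s j) = 0 := by
  simp [dsum]

@[simp]
lemma dsum_natAdd_natAdd (i : Fin r) (j : Fin s) :
    dsum v w (Fin.natAdd m i) (Fin.natAdd n j) = w i j := by
  simp [dsum]

lemma dsum_sub (v' : Matrix (Fin m) (Fin n) V) (w' : Matrix (Fin r) (Fin s) V) :
    dsum (v - v') (w - w') = dsum v w - dsum v' w' := by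
  ext i j
  induction i using Fin.addCases <;> induction j using Fin.addCases <;> simp

lemma dsum_comm : dsum w v = (dsum v w).submatrix finAddFlip finAddFlip := by
  ext i j
  induction i using Fin.addCases <;> induction j using Fin.addCases <;> simp

end DirectSum

lemma dsum_of_isEmpty {m n : ℕ} (v : Matrix (Fin m) (Fin n) V) (w : Matrix (Fin 0) (Fin 0) V) :
    dsum v w = v := by
  ext i j
  exact dsum_castAdd_castAdd v w i j

section Star

variable [StarAddMonoid V]

lemma mstar_mstar {m n : ℕ} (v : Matrix (Fin m) (Fin n) V) : mstar (mstar v) = v := by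
  funext i j
  simp [mstar]

lemma mstar_zero {m n : ℕ} : mstar (0 : Matrix (Fin m) (Fin n) V) = 0 := by
  funext i j
  simp [mstar]

lemma mstar_sub {m n : ℕ} (u v : Matrix (Fin m) (Fin n) V) :
    mstar (u - v) = mstar u - mstar v := by
  funext i j
  simp [mstar]

lemma mstar_submatrix {m n k l : ℕ} (v : Matrix (Fin m) (Fin n) V) (f : Fin k → Fin m)
    (g : Fin l → Fin n) : mstar (v.submatrix f g) = (mstar v).submatrix g f :=
  rfl

lemma mstar_dsum {m n r s : ℕ} (v : Matrix (Fin m) (Fin n) V) (w : Matrix (Fin r) (Fin s) V) :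
    mstar (dsum v w) = dsum (mstar v) (mstar w) := by
  ext i j
  induction i using Fin.addCases <;> induction j using Fin.addCases <;> simp [mstar]

end Star

section ScalarAction

variable [Module ℂ V]

lemma mstar_smul [StarAddMonoid V] [StarModule ℂ V] {m n : ℕ} (c : ℂ)
    (v : Matrix (Fin m) (Fin n) V) : mstar (c • v) = star c • mstar v := by
  funext i j
  simp [mstar, star_smul]

lemma dsum_smul {m n r s : ℕ} (c : ℂ) (v : Matrix (Fin m) (Fin n) V)
    (w : Matrix (Fin r) (Fin s) V) : dsum (c • v) (c • w) = c • dsum v w := by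
  ext i j
  induction i using Fin.addCases <;> induction j using Fin.addCases <;> simp

lemma smulB_one {m n : ℕ} (v : Matrix (Fin m) (Fin n) V) :
    smulB v (1 : Matrix (Fin n) (Fin n) ℂ) = v := by
  funext i j
  simp [smulB, Matrix.one_apply, ite_smul]

lemma aSmul_one {m n : ℕ} (v : Matrix (Fin m) (Fin n) V) :
    aSmul (1 : Matrix (Fin m) (Fin m) ℂ) v = v := by
  funext i j
  simp [aSmul, Matrix.one_apply, ite_smul]

lemma aSmul_aSmul {r m l n : ℕ} (a : Matrix (Fin r) (Fin m) ℂ) (b : Matrix (Fin m) (Fin l) ℂ)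
    (v : Matrix (Fin l) (Fin n) V) : aSmul a (aSmul b v) = aSmul (a * b) v := by
  funext i j
  simp only [aSmul, Matrix.mul_apply, Finset.smul_sum, smul_smul, Finset.sum_smul]
  exact Finset.sum_comm

lemma aSmul_toMatrix_toPEquiv {m r n : ℕ} (σ : Fin r ≃ Fin m) (v : Matrix (Fin m) (Fin n) V) :
    aSmul σ.toPEquiv.toMatrix v = v.submatrix σ id := by
  funext i j
  simp [aSmul, ite_smul]

end ScalarAction

end MatrixAlgebra

lemma OPE.d_assoc {V : Type*} [AddCommGroup V] (p q r : OPE V) :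
    (p.d q).d r = p.d (q.d r) := by
  refine Sigma.ext (Nat.add_assoc _ _ _) ?_
  refine (Fin.heq_fun₂_iff (Nat.add_assoc _ _ _) (Nat.add_assoc _ _ _)).2 fun i j => ?_
  simp only [OPE.d, dsum]
  split_ifs <;> first | rfl | omega | simp only [Nat.sub_sub]

lemma Matrix.l2_opNorm_le_one_of_conjTranspose_mul_self_eq_one {m n : ℕ}
    {α : Matrix (Fin m) (Fin n) ℂ} (h : α.conjTranspose * α = 1) : ‖α‖ ≤ 1 := by
  have hα := Matrix.l2_opNorm_conjTranspose_mul_self α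
  have h1 := Matrix.l2_opNorm_conjTranspose_mul_self (1 : Matrix (Fin n) (Fin n) ℂ)
  rw [Matrix.conjTranspose_one, one_mul] at h1
  have h1_le : ‖(1 : Matrix (Fin n) (Fin n) ℂ)‖ ≤ 1 := by
    nlinarith [norm_nonneg (1 : Matrix (Fin n) (Fin n) ℂ)]
  rw [h] at hα
  nlinarith [norm_nonneg α]
namespace AMOUS

variable {V : Type*} [AddCommGroup V] [Module ℂ V] [StarAddMonoid V] [StarModule ℂ V]
variable (A : AMOUS V) {n : ℕ}

lemma eq_zero_of_mem_pos_of_neg_mem_pos {x : Matrix (Fin n) (Fin n) V} (hx : x ∈ A.pos n)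
    (hx' : -x ∈ A.pos n) : x = 0 := by
  -- `-x = |-x| = |(-1) • x| = |x| = x`
  have h := A.abs_real_smul n (-1) x (A.pos_star n x hx)
  rw [Complex.ofReal_neg, Complex.ofReal_one, neg_one_smul, A.abs_of_pos n _ hx', abs_neg,
    abs_one, Complex.ofReal_one, one_smul, A.abs_of_pos n x hx] at h
  have h2 : (2 : ℂ) • x = 0 := by
    rw [two_smul]
    nth_rewrite 1 [← h]
    exact neg_add_cancel x
  exact (smul_eq_zero.mp h2).resolve_left two_ne_zero

lemma real_smul_mem_pos {t : ℝ} (ht : 0 ≤ t) {x : Matrix (Fin n) (Fin n) V}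
    (hx : x ∈ A.pos n) : (t : ℂ) • x ∈ A.pos n := by
  have h := A.abs_mem n n ((t : ℂ) • x)
  rwa [A.abs_real_smul n t x (A.pos_star n x hx), abs_of_nonneg ht, A.abs_of_pos n x hx] at h

lemma abs_of_isEmpty_rows (z : Matrix (Fin 0) (Fin n) V) : A.abs 0 n z = 0 := by
  have h := A.abs_smul_le 0 0 n n 0 z 1
  have hz : aSmul (0 : Matrix (Fin 0) (Fin 0) ℂ) (smulB z 1) = z := by
    funext i; exact i.elim0
  rw [hz, show cnorm (0 : Matrix (Fin 0) (Fin 0) ℂ) = 0 from norm_zero, Complex.ofReal_zero,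
    zero_smul, zero_sub] at h
  exact A.eq_zero_of_mem_pos_of_neg_mem_pos (A.abs_mem 0 n z) h

lemma abs_sub_abs_aSmul_mem_pos {r m : ℕ} {α : Matrix (Fin r) (Fin m) ℂ} (hα : cnorm α ≤ 1)
    (v : Matrix (Fin m) (Fin n) V) : A.abs m n v - A.abs r n (aSmul α v) ∈ A.pos n := by
  have h := A.abs_smul_le r m n n α v 1
  rw [smulB_one, smulB_one, A.abs_of_pos n _ (A.abs_mem m n v)] at h
  have hsum := A.pos_add n _ h _ (A.real_smul_mem_pos (sub_nonneg.2 hα) (A.abs_mem m n v))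
  convert hsum using 1
  push_cast
  module

lemma abs_aSmul_of_conjTranspose_mul_self_eq_one {r m : ℕ} {α : Matrix (Fin r) (Fin m) ℂ}
    (hα : α.conjTranspose * α = 1) (v : Matrix (Fin m) (Fin n) V) :
    A.abs r n (aSmul α v) = A.abs m n v := by
  have hle : cnorm α ≤ 1 := Matrix.l2_opNorm_le_one_of_conjTranspose_mul_self_eq_one hα
  have hle' : cnorm α.conjTranspose ≤ 1 := (Matrix.l2_opNorm_conjTranspose α).trans_le hle
  have h := A.abs_sub_abs_aSmul_mem_pos hle' (aSmul α v)
  rw [aSmul_aSmul, hα, aSmul_one] at h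
  refine sub_eq_zero.mp (A.eq_zero_of_mem_pos_of_neg_mem_pos h ?_)
  rw [neg_sub]
  exact A.abs_sub_abs_aSmul_mem_pos hle v

lemma abs_submatrix_id {r m : ℕ} (σ : Fin r ≃ Fin m) (v : Matrix (Fin m) (Fin n) V) :
    A.abs r n (v.submatrix σ id) = A.abs m n v := by
  rw [← aSmul_toMatrix_toPEquiv]
  refine A.abs_aSmul_of_conjTranspose_mul_self_eq_one ?_ v
  rw [PEquiv.mul_toMatrix_toPEquiv]
  ext i j
  simp [Matrix.one_apply, eq_comm]

variable {A}

lemma star_e : star A.e = A.e := by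
  simpa [mstar, diagE] using congrFun (congrFun (A.pos_star 1 _ A.e_pos) 0) 0

lemma mstar_eN (n : ℕ) : mstar (A.eN n) = A.eN n := by
  funext i j
  by_cases h : j = i
  · simp [mstar, eN, diagE, h, star_e]
  · simp [mstar, eN, diagE, h, Ne.symm h]

lemma eN_add (m n : ℕ) : A.eN (m + n) = dsum (A.eN m) (A.eN n) := by
  ext i j
  induction i using Fin.addCases <;> induction j using Fin.addCases <;>
    simp [eN, diagE, Fin.ext_iff] <;> omega

lemma IsOP.mem_pos {p : Matrix (Fin n) (Fin n) V} (hp : A.IsOP n p) : p ∈ A.pos n := by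
  have hsa : mstar ((2 : ℂ) • p - A.eN n) = (2 : ℂ) • p - A.eN n := by
    rw [mstar_sub, mstar_smul, mstar_eN, hp.1]
    norm_num
  have h2p : (2 : ℂ) • p ∈ A.pos n := by
    simpa [hp.2] using (A.abs_add_self n _ hsa).1
  simpa [smul_smul] using A.real_smul_mem_pos (t := 1 / 2) (by norm_num) h2p

lemma IsOP.abs_eq {p : Matrix (Fin n) (Fin n) V} (hp : A.IsOP n p) : A.abs n n p = p :=
  A.abs_of_pos n p hp.mem_pos

lemma isOP_zero : A.IsOP 1 (0 : Matrix (Fin 1) (Fin 1) V) := by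
  refine ⟨mstar_zero, ?_⟩
  have h : (2 : ℂ) • (0 : Matrix (Fin 1) (Fin 1) V) - A.eN 1 = ((-1 : ℝ) : ℂ) • A.eN 1 := by
    push_cast
    module
  rw [h, A.abs_real_smul 1 (-1) (A.eN 1) (mstar_eN 1), A.abs_of_pos 1 (A.eN 1) A.e_pos]
  norm_num

lemma IsOP.dsum {m n : ℕ} {p : Matrix (Fin m) (Fin m) V} {q : Matrix (Fin n) (Fin n) V}
    (hp : A.IsOP m p) (hq : A.IsOP n q) : A.IsOP (m + n) (dsum p q) := by
  refine ⟨by rw [mstar_dsum, hp.1, hq.1], ?_⟩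
  rw [eN_add, ← dsum_smul, ← dsum_sub, A.abs_dsum, hp.2, hq.2]

lemma isOPE_zero : A.IsOPE (OPE.zero V) := isOP_zero

lemma IsOPE.d {p q : OPE V} (hp : A.IsOPE p) (hq : A.IsOPE q) : A.IsOPE (p.d q) :=
  IsOP.dsum hp hq

lemma IsPI.mstar {m n : ℕ} {v : Matrix (Fin m) (Fin n) V} (h : A.IsPI v) : A.IsPI (mstar v) :=
  ⟨h.2, by rw [mstar_mstar]; exact h.1⟩

section PartialIsometricEquivalence

local notation:50 p:51 " ∼ " q:51 => AMOUS.Sim A p q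

lemma sim_refl {p : OPE V} (hp : A.IsOPE p) : p ∼ p := by
  have hst : mstar p.2 = p.2 := hp.1
  refine ⟨p.2, ⟨?_, ?_⟩, ?_, ?_⟩ <;> simp only [hst, IsOP.abs_eq hp] <;> exact hp

lemma Sim.symm {p q : OPE V} (h : p ∼ q) : q ∼ p := by
  obtain ⟨v, hv, hp, hq⟩ := h
  exact ⟨mstar v, hv.mstar, by rw [mstar_mstar]; exact hq, hp⟩

lemma Sim.trans (hT : A.CondT) {p q r : OPE V} (h₁ : p ∼ q) (h₂ : q ∼ r) :
    p ∼ r := by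
  obtain ⟨v, hv, hp, hq⟩ := h₁
  obtain ⟨w, hw, hq', hr⟩ := h₂
  obtain ⟨t, ht, ht₁, ht₂⟩ := hT p.1 q.1 r.1 v (mstar w) hv hw.mstar (by rw [← hq, ← hq'])
  refine ⟨t, ht, ?_, ?_⟩
  · rw [ht₁, ← hp]
  · rw [ht₂, mstar_mstar, ← hr]

lemma Sim.d {p p' q q' : OPE V} (h₁ : p ∼ p') (h₂ : q ∼ q') :
    p.d q ∼ p'.d q' := by
  obtain ⟨v, hv, hp, hp'⟩ := h₁
  obtain ⟨w, hw, hq, hq'⟩ := h₂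
  refine ⟨dsum v w, ⟨?_, ?_⟩, ?_, ?_⟩ <;> simp only [OPE.d, mstar_dsum, A.abs_dsum]
  · exact hv.1.dsum hw.1
  · exact hv.2.dsum hw.2
  · rw [← hp, ← hq]
  · rw [← hp', ← hq']

lemma sim_of_eq_submatrix {p q : OPE V} (hp : A.IsOPE p) (hq : A.IsOPE q)
    (σ : Fin q.1 ≃ Fin p.1) (h : q.2 = p.2.submatrix σ σ) : p ∼ q := by
  have habs : A.abs p.1 q.1 (q.2.submatrix σ.symm id) = q.2 := by
    rw [A.abs_submatrix_id, IsOP.abs_eq hq]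
  have hstar : mstar (q.2.submatrix σ.symm id) = p.2.submatrix σ id := by
    have hp' : mstar p.2 = p.2 := hp.1
    rw [mstar_submatrix, h, mstar_submatrix, hp']
    ext i j
    simp
  have habs' : A.abs q.1 p.1 (mstar (q.2.submatrix σ.symm id)) = p.2 := by
    rw [hstar, A.abs_submatrix_id, IsOP.abs_eq hp]
  exact ⟨q.2.submatrix σ.symm id, ⟨by rw [habs]; exact hq, by rw [habs']; exact hp⟩,
    habs'.symm, habs.symm⟩

lemma sim_d_comm {p q : OPE V} (hp : A.IsOPE p) (hq : A.IsOPE q) : p.d q ∼ q.d p :=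
  sim_of_eq_submatrix (hp.d hq) (hq.d hp) finAddFlip (dsum_comm p.2 q.2)

lemma sim_d_zero {p : OPE V} (hp : A.IsOPE p) : p.d (OPE.zero V) ∼ p := by
  have hp' : mstar p.2 = p.2 := hp.1
  have habs : A.abs (p.1 + 1) p.1 (dsum p.2 (0 : Matrix (Fin 1) (Fin 0) V)) = p.2 := by
    refine (A.abs_dsum p.1 p.1 1 0 _ _).trans ?_
    rw [IsOP.abs_eq hp, dsum_of_isEmpty]
  have habs' : A.abs p.1 (p.1 + 1) (mstar (dsum p.2 (0 : Matrix (Fin 1) (Fin 0) V))) =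
      dsum p.2 (0 : Matrix (Fin 1) (Fin 1) V) := by
    rw [mstar_dsum]
    refine (A.abs_dsum p.1 p.1 0 1 _ _).trans ?_
    rw [hp', IsOP.abs_eq hp, A.abs_of_isEmpty_rows]
  refine ⟨dsum p.2 (0 : Matrix (Fin 1) (Fin 0) V), ⟨?_, ?_⟩, habs'.symm, habs.symm⟩
  · show A.IsOP p.1 (A.abs (p.1 + 1) p.1 _)
    rw [habs]
    exact hp
  · show A.IsOP (p.1 + 1)
      (A.abs p.1 (p.1 + 1) (mstar (dsum p.2 (0 : Matrix (Fin 1) (Fin 0) V))))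
    rw [habs']
    exact hp.d isOPE_zero

lemma sim_d_right_comm {p q r : OPE V} (hp : A.IsOPE p) (hq : A.IsOPE q) (hr : A.IsOPE r) :
    (p.d q).d r ∼ (p.d r).d q := by
  rw [OPE.d_assoc, OPE.d_assoc]
  exact (sim_refl hp).d (sim_d_comm hq hr)

lemma sim_d_d_comm {a b c d : OPE V} (ha : A.IsOPE a) (hb : A.IsOPE b) (hc : A.IsOPE c)
    (hd : A.IsOPE d) : (a.d b).d (c.d d) ∼ (a.d c).d (b.d d) := by
  rw [← OPE.d_assoc, ← OPE.d_assoc]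
  exact (sim_d_right_comm ha hb hc).d (sim_refl hd)

lemma Sim.asim {p q : OPE V} (h : p ∼ q) : A.ASim p q :=
  ⟨OPE.zero V, isOPE_zero, h.d (sim_refl isOPE_zero)⟩

lemma ASim.symm {p q : OPE V} (h : A.ASim p q) : A.ASim q p := by
  obtain ⟨r, hr, h⟩ := h
  exact ⟨r, hr, h.symm⟩

lemma ASim.trans (hT : A.CondT) {p q t : OPE V} (hq : A.IsOPE q) (ht : A.IsOPE t)
    (h₁ : A.ASim p q) (h₂ : A.ASim q t) : A.ASim p t := by
  obtain ⟨r, hr, h₁⟩ := h₁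
  obtain ⟨s, hs, h₂⟩ := h₂
  refine ⟨r.d s, hr.d hs, ?_⟩
  let _ : Trans A.Sim A.Sim A.Sim := ⟨fun h h' => h.trans hT h'⟩
  rw [← OPE.d_assoc, ← OPE.d_assoc]
  calc (p.d r).d s ∼ (q.d r).d s := h₁.d (sim_refl hs)
    _ ∼ (q.d s).d r := sim_d_right_comm hq hr hs
    _ ∼ (t.d s).d r := h₂.d (sim_refl hr)
    _ ∼ (t.d r).d s := sim_d_right_comm ht hs hr

lemma ASim.d (hT : A.CondT) {p p' q q' : OPE V} (hp : A.IsOPE p) (hp' : A.IsOPE p')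
    (hq : A.IsOPE q) (hq' : A.IsOPE q') (h₁ : A.ASim p p') (h₂ : A.ASim q q') :
    A.ASim (p.d q) (p'.d q') := by
  obtain ⟨r, hr, h₁⟩ := h₁
  obtain ⟨s, hs, h₂⟩ := h₂
  refine ⟨r.d s, hr.d hs, ?_⟩
  let _ : Trans A.Sim A.Sim A.Sim := ⟨fun h h' => h.trans hT h'⟩
  calc (p.d q).d (r.d s) ∼ (p.d r).d (q.d s) := sim_d_d_comm hp hq hr hs
    _ ∼ (p'.d r).d (q'.d s) := h₁.d h₂
    _ ∼ (p'.d q').d (r.d s) := sim_d_d_comm hp' hr hq' hs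

lemma ASim.of_d_right {p q r : OPE V} (hr : A.IsOPE r) (h : A.ASim (p.d r) (q.d r)) :
    A.ASim p q := by
  obtain ⟨s, hs, h⟩ := h
  refine ⟨r.d s, hr.d hs, ?_⟩
  rwa [← OPE.d_assoc, ← OPE.d_assoc]

end PartialIsometricEquivalence

end AMOUS

theorem statement13_general {V : Type*} [AddCommGroup V] [Module ℂ V] [StarAddMonoid V] [StarModule ℂ V] (A : AMOUS V) (hT : A.CondT) :
    -- `≈` is an equivalence relation on `𝒪𝒫_∞(V)`
    ((∀ p : OPE V, A.IsOPE p → A.ASim p p) ∧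
      (∀ p q : OPE V, A.IsOPE p → A.IsOPE q → A.ASim p q → A.ASim q p) ∧
      (∀ p q r : OPE V, A.IsOPE p → A.IsOPE q → A.IsOPE r →
        A.ASim p q → A.ASim q r → A.ASim p r)) ∧
    -- `+` is well defined on equivalence classes
    (∀ p p' q q' : OPE V, A.IsOPE p → A.IsOPE p' → A.IsOPE q → A.IsOPE q' →
      A.ASim p p' → A.ASim q q' → A.ASim (p.d q) (p'.d q')) ∧
    -- `[p] + [0] = [p]`
    (∀ p : OPE V, A.IsOPE p → A.ASim (p.d (OPE.zero V)) p) ∧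
    -- commutativity
    (∀ p q : OPE V, A.IsOPE p → A.IsOPE q → A.ASim (p.d q) (q.d p)) ∧
    -- associativity
    (∀ p q r : OPE V, A.IsOPE p → A.IsOPE q → A.IsOPE r →
      A.ASim ((p.d q).d r) (p.d (q.d r))) ∧
    -- cancellation
    (∀ p q r : OPE V, A.IsOPE p → A.IsOPE q → A.IsOPE r →
      A.ASim (p.d r) (q.d r) → A.ASim p q) :=
  ⟨⟨fun _ hp => (AMOUS.sim_refl hp).asim,
      fun _ _ _ _ h => h.symm,
      fun _ _ _ _ hq hr h₁ h₂ => h₁.trans hT hq hr h₂⟩,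
    fun _ _ _ _ hp hp' hq hq' h₁ h₂ => h₁.d hT hp hp' hq hq' h₂,
    fun _ hp => (AMOUS.sim_d_zero hp).asim,
    fun _ _ hp hq => (AMOUS.sim_d_comm hp hq).asim,
    fun p q r hp hq hr => OPE.d_assoc p q r ▸ (AMOUS.sim_refl (hp.d (hq.d hr))).asim,
    fun _ _ _ _ _ hr h => h.of_d_right hr⟩

/-- `(𝒪𝒫_∞(V)/≈, +)` with `[p] + [q] = [p ⊕ q]` is a well-defined
abelian semigroup with identity `[0]` satisfying the cancellation law. -/
theorem statement13 {V : Type*} [AddCommGroup V] [Module ℂ V] [StarAddMonoid V] [StarModule ℂ V] (A : AMOUS V) (habs : A.IsAbsolute) (hT : A.CondT) :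
    -- `≈` is an equivalence relation on `𝒪𝒫_∞(V)`
    ((∀ p : OPE V, A.IsOPE p → A.ASim p p) ∧
      (∀ p q : OPE V, A.IsOPE p → A.IsOPE q → A.ASim p q → A.ASim q p) ∧
      (∀ p q r : OPE V, A.IsOPE p → A.IsOPE q → A.IsOPE r →
        A.ASim p q → A.ASim q r → A.ASim p r)) ∧
    -- `+` is well defined on equivalence classes
    (∀ p p' q q' : OPE V, A.IsOPE p → A.IsOPE p' → A.IsOPE q → A.IsOPE q' →
      A.ASim p p' → A.ASim q q' → A.ASim (p.d q) (p'.d q')) ∧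
    -- `[p] + [0] = [p]`
    (∀ p : OPE V, A.IsOPE p → A.ASim (p.d (OPE.zero V)) p) ∧
    -- commutativity
    (∀ p q : OPE V, A.IsOPE p → A.IsOPE q → A.ASim (p.d q) (q.d p)) ∧
    -- associativity
    (∀ p q r : OPE V, A.IsOPE p → A.IsOPE q → A.IsOPE r →
      A.ASim ((p.d q).d r) (p.d (q.d r))) ∧
    -- cancellation
    (∀ p q r : OPE V, A.IsOPE p → A.IsOPE q → A.IsOPE r →
      A.ASim (p.d r) (q.d r) → A.ASim p q) :=
  statement13_general A hT
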